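/- For every causal-net G and every n, the assignment sending a causal-coloring λ : G → S onto a sorting-net S of order n to the vertex function v ↦ λ(v) is a bijection between causal-colorings of G onto sorting-nets of order n and surjective linear-colorings L : V(G) → {1, …, n}. -/

import Mathlib

open CategoryTheory

namespace CausalNets

/-- Acyclicity condition for raw directed-multigraph data: every directed cycle
has length zero. -/
def NoCycleData (V E : Type) (s t : E → V) : Prop :=
  letI : Quiver V := ⟨fun a b => { e : E // s e = a ∧ t e = b }⟩
  ∀ (v : V) (p : Quiver.Path v v), p.length = 0

/-- A causal-net: a finite acyclic directed multigraph (isolated vertices and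
parallel edges allowed). -/
structure CausalNet where
  V : Type
  E : Type
  src : E → V
  tgt : E → V
  fintypeV : Fintype V
  fintypeE : Fintype E
  acyclic : NoCycleData V E src tgt

attribute [instance] CausalNet.fintypeV CausalNet.fintypeE

instance CausalNet.quiver (G : CausalNet) : Quiver G.V :=
  ⟨fun a b => { e : G.E // G.src e = a ∧ G.tgt e = b }⟩

/-- The category `Cau` of causal-nets: a morphism `G ⟶ H` is a functor between
the path categories `Paths G.V ⥤ Paths H.V`. -/
instance : Category CausalNet where
  Hom G H := Paths G.V ⥤ Paths H.V
  id G := 𝟭 (Paths G.V)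
  comp φ ψ := φ ⋙ ψ

variable {G H K : CausalNet}

/-- The action of a morphism of causal-nets on vertices (objects). -/
def vmap (φ : G ⟶ H) : G.V → H.V := (φ : Paths G.V ⥤ Paths H.V).obj

/-- The action of a morphism of causal-nets on directed paths (morphisms). -/
def pmap (φ : G ⟶ H) {a b : G.V} (p : Quiver.Path a b) :
    Quiver.Path (vmap φ a) (vmap φ b) :=
  (φ : Paths G.V ⥤ Paths H.V).map p

/-- The quiver arrow corresponding to an edge. -/
def edgeHom (G : CausalNet) (e : G.E) : G.src e ⟶ G.tgt e := ⟨e, rfl, rfl⟩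

/-- The directed path which is the image of the edge `e` under the morphism `φ`. -/
def edgePath (φ : G ⟶ H) (e : G.E) :
    Quiver.Path (vmap φ (G.src e)) (vmap φ (G.tgt e)) :=
  pmap φ (Quiver.Hom.toPath (edgeHom G e))

/-- The underlying edge of a quiver arrow. -/
def homEdge {a b : G.V} (f : a ⟶ b) : G.E := Subtype.val f

/-- The list of edges traversed by a directed path. -/
def pathEdges : {a b : G.V} → Quiver.Path a b → List G.E
  | _, _, Quiver.Path.nil => []
  | _, _, Quiver.Path.cons p f => pathEdges p ++ [homEdge f]

/-- The list of vertices visited by a directed path (including endpoints). -/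
def pathVertices : {a b : G.V} → Quiver.Path a b → List G.V
  | a, _, Quiver.Path.nil => [a]
  | _, b, Quiver.Path.cons p _ => pathVertices p ++ [b]

/-- An edge `e` is a contraction of `φ` if `φ(e)` has length `0`. -/
def IsContractionEdge (φ : G ⟶ H) (e : G.E) : Prop := (edgePath φ e).length = 0

/-- An edge `e` is a segment of `φ` if `φ(e)` has length `1`. -/
def IsSegmentEdge (φ : G ⟶ H) (e : G.E) : Prop := (edgePath φ e).length = 1

/-- An edge `e` is a subdivision of `φ` if `φ(e)` has length at least `2`. -/
def IsSubdivisionEdge (φ : G ⟶ H) (e : G.E) : Prop := 2 ≤ (edgePath φ e).length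

/-- `φ` maps the edge `e` to the length-one path consisting of the edge `h`. -/
def MapsToEdge (φ : G ⟶ H) (e : G.E) (h : H.E) : Prop :=
  pathEdges (edgePath φ e) = [h]

/-- A quotient: a morphism with no null-vertex and no null-edge. -/
def IsQuotientMor (φ : G ⟶ H) : Prop :=
  (∀ v : H.V, ∃ w : G.V, vmap φ w = v) ∧ ∀ h : H.E, ∃ e : G.E, MapsToEdge φ e h

/-- A coarse-graining: a quotient with no subdivision. -/
def IsCoarseGraining (φ : G ⟶ H) : Prop :=
  IsQuotientMor φ ∧ ∀ e : G.E, ¬ IsSubdivisionEdge φ e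

/-- A vertex-coarse-graining: a coarse-graining with no multiple-edge. -/
def IsVertexCoarseGraining (φ : G ⟶ H) : Prop :=
  IsCoarseGraining φ ∧
  ∀ (h : H.E) (e₁ e₂ : G.E), MapsToEdge φ e₁ h → MapsToEdge φ e₂ h → e₁ = e₂

/-- An edge-coarse-graining: a coarse-graining with no multiple-vertex and no
contraction. -/
def IsEdgeCoarseGraining (φ : G ⟶ H) : Prop :=
  IsCoarseGraining φ ∧ Function.Injective (vmap φ) ∧ ∀ e : G.E, ¬ IsContractionEdge φ e

/-- A merging: a vertex-coarse-graining with no contraction. -/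
def IsMerging (φ : G ⟶ H) : Prop :=
  IsVertexCoarseGraining φ ∧ ∀ e : G.E, ¬ IsContractionEdge φ e

/-- A fusion: a coarse-graining with no contraction. -/
def IsFusion (φ : G ⟶ H) : Prop :=
  IsCoarseGraining φ ∧ ∀ e : G.E, ¬ IsContractionEdge φ e

/-- An inclusion: a morphism injective on vertices and on directed paths
(an injective-on-objects faithful functor). -/
def IsInclusion (φ : G ⟶ H) : Prop :=
  Function.Injective (vmap φ) ∧
  ∀ (a b : G.V) (p q : Quiver.Path a b), pmap φ p = pmap φ q → p = q

/-- An embedding: an inclusion with no subdivision. -/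
def IsEmbedding (φ : G ⟶ H) : Prop :=
  IsInclusion φ ∧ ∀ e : G.E, ¬ IsSubdivisionEdge φ e

/-- An immersion: an inclusion such that images of distinct subdivision edges
share no edge. -/
def IsImmersion (φ : G ⟶ H) : Prop :=
  IsInclusion φ ∧
  ∀ e₁ e₂ : G.E, e₁ ≠ e₂ → IsSubdivisionEdge φ e₁ → IsSubdivisionEdge φ e₂ →
    ∀ h : H.E, h ∈ pathEdges (edgePath φ e₁) → h ∉ pathEdges (edgePath φ e₂)

/-- The internal vertices of a directed path (all visited vertices except the
two endpoints). -/
def internalVertices {a b : G.V} (p : Quiver.Path a b) : List G.V :=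
  ((pathVertices p).dropLast).tail

/-- A strong morphism: all internal vertices of images of subdivision edges are
null-vertices. -/
def IsStrong (φ : G ⟶ H) : Prop :=
  ∀ e : G.E, IsSubdivisionEdge φ e →
    ∀ v ∈ internalVertices (edgePath φ e), ∀ w : G.V, vmap φ w ≠ v

/-- A vertex-disjoint morphism: images of distinct subdivision edges share no
internal vertex. -/
def IsVertexDisjoint (φ : G ⟶ H) : Prop :=
  ∀ e₁ e₂ : G.E, e₁ ≠ e₂ → IsSubdivisionEdge φ e₁ → IsSubdivisionEdge φ e₂ →
    ∀ v : H.V, v ∈ internalVertices (edgePath φ e₁) → v ∉ internalVertices (edgePath φ e₂)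

/-- A topological embedding: a strong vertex-disjoint inclusion. -/
def IsTopologicalEmbedding (φ : G ⟶ H) : Prop :=
  IsInclusion φ ∧ IsStrong φ ∧ IsVertexDisjoint φ

/-- The edge `e` covers the vertex `v` if `v` occurs on the path `φ(e)`. -/
def Covers (φ : G ⟶ H) (e : G.E) (v : H.V) : Prop :=
  v ∈ pathVertices (edgePath φ e)

/-- An isolated vertex: a vertex incident to no edge. -/
def IsolatedVertex (G : CausalNet) (v : G.V) : Prop :=
  ∀ e : G.E, G.src e ≠ v ∧ G.tgt e ≠ v

/-- A subdivision morphism: a topological embedding such that every non-isolated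
vertex of the codomain is covered and every isolated vertex of the codomain is a
simple-vertex. -/
def IsSubdivisionMor (φ : G ⟶ H) : Prop :=
  IsTopologicalEmbedding φ ∧
  (∀ v : H.V, ¬ IsolatedVertex H v → ∃ e : G.E, Covers φ e v) ∧
  (∀ v : H.V, IsolatedVertex H v → ∃! w : G.V, vmap φ w = v)

theorem mapPath_length {V W : Type} [Quiver V] [Quiver W] (F : V ⥤q W) :
    ∀ {a b : V} (p : Quiver.Path a b), (F.mapPath p).length = p.length := by
  intro a b p
  induction p with
  | nil => rfl
  | cons q f ih =>
      show ((F.mapPath q).cons (F.map f)).length = (q.cons f).length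
      rw [Quiver.Path.length_cons, Quiver.Path.length_cons, ih]

theorem noCycleData_of_map {V₁ E₁ : Type} (s₁ t₁ : E₁ → V₁) (G : CausalNet)
    (f : V₁ → G.V) (g : E₁ → G.E)
    (hs : ∀ e, G.src (g e) = f (s₁ e)) (ht : ∀ e, G.tgt (g e) = f (t₁ e)) :
    NoCycleData V₁ E₁ s₁ t₁ := by
  letI : Quiver V₁ := ⟨fun a b => { e : E₁ // s₁ e = a ∧ t₁ e = b }⟩
  intro v p
  let F : V₁ ⥤q G.V :=
    { obj := f
      map := fun {a b} e =>
        ⟨g (Subtype.val e), by rw [hs, (Subtype.prop e).1], by rw [ht, (Subtype.prop e).2]⟩ }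
  have h := G.acyclic (f v) (F.mapPath p)
  rw [mapPath_length] at h
  exact h

theorem noCycleData_of_lt {V E : Type} [Preorder V] (s t : E → V)
    (hlt : ∀ e, s e < t e) : NoCycleData V E s t := by
  letI : Quiver V := ⟨fun a b => { e : E // s e = a ∧ t e = b }⟩
  have key : ∀ {a b : V} (p : Quiver.Path a b), (a = b ∧ p.length = 0) ∨ a < b := by
    intro a b p
    induction p with
    | nil => exact Or.inl ⟨rfl, rfl⟩
    | cons q f ih =>
        have hcb := hlt (Subtype.val f)
        rw [(Subtype.prop f).1, (Subtype.prop f).2] at hcb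
        rcases ih with ⟨h, _⟩ | h
        · exact Or.inr (by rw [h]; exact hcb)
        · exact Or.inr (lt_trans h hcb)
  intro v p
  rcases key p with ⟨_, h⟩ | h
  · exact h
  · exact absurd h (lt_irrefl v)

/-- The sub-causal-net spanned by a set of vertices and a set of edges. -/
noncomputable def mkSub (G : CausalNet) (Vs : Set G.V) (Es : Set G.E)
    (hs : ∀ e ∈ Es, G.src e ∈ Vs) (ht : ∀ e ∈ Es, G.tgt e ∈ Vs) : CausalNet where
  V := Vs
  E := Es
  src e := ⟨G.src e.1, hs e.1 e.2⟩
  tgt e := ⟨G.tgt e.1, ht e.1 e.2⟩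
  fintypeV := Fintype.ofFinite _
  fintypeE := Fintype.ofFinite _
  acyclic := noCycleData_of_map _ _ G Subtype.val Subtype.val (fun _ => rfl) (fun _ => rfl)

/-- The fiber of a morphism at a vertex `v` of the codomain: the sub-causal-net
of the domain on the vertices mapped to `v` and the edges mapped to the identity
path at `v`. -/
noncomputable def fiber (φ : G ⟶ H) (v : H.V) : CausalNet :=
  mkSub G {w : G.V | vmap φ w = v}
    {e : G.E | IsContractionEdge φ e ∧ vmap φ (G.src e) = v}
    (fun _ he => he.2)
    (fun e he =>
      show vmap φ (G.tgt e) = v from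
        Quiver.Path.eq_of_length_zero (edgePath φ e) he.1 ▸ he.2)

/-- The underlying undirected (simple) graph of a causal-net. -/
def undirected (G : CausalNet) : SimpleGraph G.V where
  Adj v w := v ≠ w ∧ ∃ e : G.E, (G.src e = v ∧ G.tgt e = w) ∨ (G.src e = w ∧ G.tgt e = v)
  symm := by
    constructor
    rintro v w ⟨hne, e, he⟩
    exact ⟨hne.symm, e, he.symm⟩
  loopless := by
    constructor
    intro v h
    exact h.1 rfl

/-- A causal-net is connected if its underlying undirected graph is connected. -/
def Connected (G : CausalNet) : Prop := (undirected G).Connected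

/-- A causal-Tree: a causal-net whose simplification has a tree as underlying
undirected graph.  (Since a causal-net is acyclic, the underlying undirected
graph of its simplification is exactly `undirected G`.) -/
def IsCausalTree (G : CausalNet) : Prop := (undirected G).IsTree

/-- A contraction: a vertex-coarse-graining all of whose fibers are connected. -/
def IsContractionMor (φ : G ⟶ H) : Prop :=
  IsVertexCoarseGraining φ ∧ ∀ v : H.V, Connected (fiber φ v)

/-- A simple contraction: a contraction with exactly one non-trivial fiber, that
fiber consisting of two vertices together with all edges from the first to the
second. -/
def IsSimpleContraction (φ : G ⟶ H) : Prop :=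
  IsContractionMor φ ∧
  ∃ w₁ w₂ : G.V, w₁ ≠ w₂ ∧ vmap φ w₁ = vmap φ w₂ ∧
    (∃ e : G.E, G.src e = w₁ ∧ G.tgt e = w₂) ∧
    (∀ e : G.E, IsContractionEdge φ e ↔ (G.src e = w₁ ∧ G.tgt e = w₂)) ∧
    (∀ u u' : G.V, vmap φ u = vmap φ u' →
      u = u' ∨ ((u = w₁ ∨ u = w₂) ∧ (u' = w₁ ∨ u' = w₂)))

/-- A tree-contraction: a contraction all of whose fibers are causal-Trees. -/
def IsTreeContraction (φ : G ⟶ H) : Prop :=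
  IsContractionMor φ ∧ ∀ v : H.V, IsCausalTree (fiber φ v)

/-- A directed multi-path: a causal-net whose simplification is a directed path. -/
def IsDirectedMultiPath (K : CausalNet) : Prop :=
  ∃ (a b : K.V) (p : Quiver.Path a b),
    (pathVertices p).Nodup ∧ (∀ v : K.V, v ∈ pathVertices p) ∧
    ∀ e : K.E, ∃ h ∈ pathEdges p, K.src e = K.src h ∧ K.tgt e = K.tgt h

/-- A path-contraction: a vertex-coarse-graining all of whose fibers are
directed multi-paths. -/
def IsPathContraction (φ : G ⟶ H) : Prop :=
  IsVertexCoarseGraining φ ∧ ∀ v : H.V, IsDirectedMultiPath (fiber φ v)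

/-- A point: a causal-net with exactly one vertex and no edges. -/
def IsPoint (A : CausalNet) : Prop := (∃ v : A.V, ∀ w : A.V, w = v) ∧ IsEmpty A.E

/-- Reachability: there is a directed path from `a` to `b`. -/
def Reaches (G : CausalNet) (a b : G.V) : Prop := Nonempty (Quiver.Path a b)

/-- A coclique: a set of vertices no two distinct members of which are
comparable under the reachability order. -/
def IsCoclique (G : CausalNet) (S : Set G.V) : Prop :=
  ∀ a ∈ S, ∀ b ∈ S, a ≠ b → ¬ Reaches G a b

/-- A multi-edge: the nonempty set of all edges from one fixed vertex to another. -/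
def IsMultiEdge (G : CausalNet) (s : Set G.E) : Prop :=
  s.Nonempty ∧ ∃ a b : G.V, s = {e : G.E | G.src e = a ∧ G.tgt e = b}

/-- The pair of vertices whose multi-edge is contracted by a simple contraction. -/
def ContractedPair (φ : G ⟶ H) (w₁ w₂ : G.V) : Prop :=
  w₁ ≠ w₂ ∧ vmap φ w₁ = vmap φ w₂ ∧ (∃ e : G.E, G.src e = w₁ ∧ G.tgt e = w₂) ∧
  ∀ e : G.E, IsContractionEdge φ e ↔ (G.src e = w₁ ∧ G.tgt e = w₂)

/-- Two causal-nets are isomorphic in `Cau`. -/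
def IsIsomorphicTo (A B : CausalNet) : Prop := ∃ φ : A ⟶ B, IsIso φ

/-- A simple causal-net: at most one edge between any ordered pair of vertices. -/
def IsSimpleNet (G : CausalNet) : Prop :=
  ∀ e₁ e₂ : G.E, G.src e₁ = G.src e₂ → G.tgt e₁ = G.tgt e₂ → e₁ = e₂

/-- A harmonic causal-net: every fusion out of it is an isomorphism. -/
def Harmonic (G : CausalNet) : Prop :=
  ∀ (H : CausalNet) (φ : G ⟶ H), IsFusion φ → IsIso φ

/-- A hamiltonian path: a directed path visiting every vertex exactly once. -/
def HasHamiltonianPath (G : CausalNet) : Prop :=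
  ∃ (a b : G.V) (p : Quiver.Path a b),
    (pathVertices p).Nodup ∧ ∀ v : G.V, v ∈ pathVertices p

/-- Morphisms which can be written as a composition of finitely many morphisms
each satisfying `P`. -/
inductive IsCompOf (P : ∀ ⦃A B : CausalNet⦄, (A ⟶ B) → Prop) :
    ∀ {A B : CausalNet}, (A ⟶ B) → Prop
  | of {A B : CausalNet} (φ : A ⟶ B) : P φ → IsCompOf P φ
  | comp {A B C : CausalNet} (φ : A ⟶ B) (ψ : B ⟶ C) :
      IsCompOf P φ → IsCompOf P ψ → IsCompOf P (φ ≫ ψ)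

structure SortingNet (n : ℕ) where
  edges : Finset (Fin n × Fin n)
  lt : ∀ p ∈ edges, p.1 < p.2

noncomputable def SortingNet.toCausalNet {n : ℕ} (S : SortingNet n) : CausalNet where
  V := Fin n
  E := {p : Fin n × Fin n // p ∈ S.edges}
  src p := p.1.1
  tgt p := p.1.2
  fintypeV := inferInstance
  fintypeE := Fintype.ofFinite _
  acyclic := noCycleData_of_lt _ _ (fun e => S.lt e.1 e.2)

end CausalNets

/-! A fusion `λ : G → S` sends every edge to a single edge, so on a sorting-net `S` its vertex map
strictly increases along edges, and since `λ` has no null-vertex it is surjective. Having no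
null-edge either, `λ` forces the edges of `S` to be exactly the pairs `(λ s(e), λ t(e))`, and as a
simple net has at most one edge between two vertices, `λ` is determined by its vertex map.
Conversely, a surjective linear-coloring `L` is the vertex map of the fusion onto the sorting-net
with edges `(L s(e), L t(e))`. -/

namespace Quiver.Path

variable {V : Type*} [Quiver V]

theorem exists_eq_toPath_of_length_eq_one {a b : V} (p : Path a b) (hp : p.length = 1) :
    ∃ f : a ⟶ b, p = f.toPath := by
  obtain ⟨c, f, q, hq, rfl⟩ := p.eq_toPath_comp_of_length_eq_succ (n := 0) hp
  obtain rfl := eq_of_length_zero q hq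
  obtain rfl := eq_nil_of_length_zero q hq
  exact ⟨f, rfl⟩

theorem eq_of_length_eq_one [∀ a b : V, Subsingleton (a ⟶ b)] {a b : V} {p q : Path a b}
    (hp : p.length = 1) (hq : q.length = 1) : p = q := by
  obtain ⟨f, rfl⟩ := p.exists_eq_toPath_of_length_eq_one hp
  obtain ⟨g, rfl⟩ := q.exists_eq_toPath_of_length_eq_one hq
  rw [Subsingleton.elim f g]

end Quiver.Path

theorem CategoryTheory.Paths.length_eqToHom_comp_comp_eqToHom {V : Type*} [Quiver V]
    {a a' b b' : Paths V} (ha : a = a') (p : a' ⟶ b') (hb : b' = b) :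
    Quiver.Path.length (eqToHom ha ≫ p ≫ eqToHom hb) = Quiver.Path.length p := by
  subst ha hb
  simp

namespace CausalNets

variable {G H : CausalNet}

theorem length_pathEdges {a b : G.V} (p : Quiver.Path a b) :
    (pathEdges p).length = p.length := by
  induction p with
  | nil => simp [pathEdges]
  | cons p f ih => simp [pathEdges, ih]

theorem pathEdges_toPath {a b : G.V} (f : a ⟶ b) : pathEdges f.toPath = [homEdge f] := by
  simp [pathEdges, Quiver.Hom.toPath]

theorem MapsToEdge.length_edgePath {φ : G ⟶ H} {e : G.E} {h : H.E} (hm : MapsToEdge φ e h) :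
    (edgePath φ e).length = 1 := by
  rw [← length_pathEdges, hm, List.length_singleton]

theorem MapsToEdge.src_tgt {φ : G ⟶ H} {e : G.E} {h : H.E} (hm : MapsToEdge φ e h) :
    H.src h = vmap φ (G.src e) ∧ H.tgt h = vmap φ (G.tgt e) := by
  obtain ⟨f, hf⟩ := (edgePath φ e).exists_eq_toPath_of_length_eq_one hm.length_edgePath
  rw [MapsToEdge, hf, pathEdges_toPath, List.singleton_inj] at hm
  exact hm ▸ f.2

theorem IsFusion.length_edgePath {φ : G ⟶ H} (hφ : IsFusion φ) (e : G.E) :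
    (edgePath φ e).length = 1 := by
  have hsub : ¬ 2 ≤ (edgePath φ e).length := hφ.1.2 e
  have hcon : ¬ (edgePath φ e).length = 0 := hφ.2 e
  omega

theorem IsSimpleNet.subsingleton_hom (hH : IsSimpleNet H) (a b : H.V) : Subsingleton (a ⟶ b) :=
  ⟨fun f g => Subtype.ext (hH _ _ (f.2.1.trans g.2.1.symm) (f.2.2.trans g.2.2.symm))⟩

theorem IsFusion.ext_of_isSimpleNet {φ ψ : G ⟶ H} (hH : IsSimpleNet H) (hφ : IsFusion φ)
    (hψ : IsFusion ψ) (h : vmap φ = vmap ψ) : φ = ψ := by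
  have := hH.subsingleton_hom
  refine Paths.ext_functor h ?_
  rintro a b ⟨e, rfl, rfl⟩
  refine Quiver.Path.eq_of_length_eq_one (hφ.length_edgePath e) ?_
  rw [Paths.length_eqToHom_comp_comp_eqToHom]
  exact hψ.length_edgePath e

namespace SortingNet

variable {n : ℕ}

theorem ext_edges {S T : SortingNet n} (h : S.edges = T.edges) : S = T := by
  cases S
  cases T
  cases h
  rfl

theorem isSimpleNet (S : SortingNet n) : IsSimpleNet S.toCausalNet :=
  fun _ _ hs ht => Subtype.ext (Prod.ext hs ht)

noncomputable def ofLinearColoring (L : G.V → Fin n)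
    (hL : ∀ e : G.E, L (G.src e) < L (G.tgt e)) : SortingNet n where
  edges := Finset.univ.image fun e => (L (G.src e), L (G.tgt e))
  lt := by simpa using hL

theorem mem_ofLinearColoring_edges {L : G.V → Fin n} (hL : ∀ e : G.E, L (G.src e) < L (G.tgt e))
    (e : G.E) : (L (G.src e), L (G.tgt e)) ∈ (ofLinearColoring L hL).edges :=
  Finset.mem_image_of_mem _ (Finset.mem_univ e)

end SortingNet

variable {n : ℕ}

theorem IsFusion.mem_edges {S : SortingNet n} {φ : G ⟶ S.toCausalNet} (hφ : IsFusion φ)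
    (e : G.E) : ((vmap φ (G.src e), vmap φ (G.tgt e)) : Fin n × Fin n) ∈ S.edges := by
  obtain ⟨f, -⟩ := (edgePath φ e).exists_eq_toPath_of_length_eq_one (hφ.length_edgePath e)
  obtain ⟨⟨p, hp⟩, hs, ht⟩ := f
  exact hs ▸ ht ▸ hp

theorem IsFusion.edges_eq {S : SortingNet n} {φ : G ⟶ S.toCausalNet} (hφ : IsFusion φ) :
    S.edges = Finset.univ.image
      fun e : G.E => ((vmap φ (G.src e), vmap φ (G.tgt e)) : Fin n × Fin n) := by
  refine Finset.ext fun p => ⟨fun hp => ?_, fun hp => ?_⟩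
  · obtain ⟨e, he⟩ := hφ.1.1.2 ⟨p, hp⟩
    exact Finset.mem_image.2 ⟨e, Finset.mem_univ e, Prod.ext he.src_tgt.1.symm he.src_tgt.2.symm⟩
  · obtain ⟨e, -, rfl⟩ := Finset.mem_image.1 hp
    exact hφ.mem_edges e

noncomputable def homOfLinearColoring (L : G.V → Fin n)
    (hL : ∀ e : G.E, L (G.src e) < L (G.tgt e)) :
    G ⟶ (SortingNet.ofLinearColoring L hL).toCausalNet :=
  Paths.lift
    { obj := L
      map := fun f => Quiver.Hom.toPath
        ⟨⟨_, f.2.1 ▸ f.2.2 ▸ SortingNet.mem_ofLinearColoring_edges hL f.1⟩, rfl, rfl⟩ }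

theorem mapsToEdge_homOfLinearColoring {L : G.V → Fin n}
    (hL : ∀ e : G.E, L (G.src e) < L (G.tgt e)) (e : G.E) :
    MapsToEdge (homOfLinearColoring L hL) e ⟨_, SortingNet.mem_ofLinearColoring_edges hL e⟩ := by
  unfold MapsToEdge edgePath pmap homOfLinearColoring
  rw [Paths.lift_toPath]
  exact pathEdges_toPath _

theorem isFusion_homOfLinearColoring {L : G.V → Fin n} (hsurj : Function.Surjective L)
    (hL : ∀ e : G.E, L (G.src e) < L (G.tgt e)) : IsFusion (homOfLinearColoring L hL) := by
  have hlen e := (mapsToEdge_homOfLinearColoring hL e).length_edgePath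
  refine ⟨⟨⟨hsurj, fun ⟨p, hp⟩ => ?_⟩, fun e => by simp [IsSubdivisionEdge, hlen e]⟩,
    fun e => by simp [IsContractionEdge, hlen e]⟩
  obtain ⟨e, -, rfl⟩ := Finset.mem_image.1 hp
  exact ⟨e, mapsToEdge_homOfLinearColoring hL e⟩

theorem coloring_bij_linearColoring (G : CausalNet) (n : ℕ) :
    Set.BijOn
      (fun p : Σ S : SortingNet n, (G ⟶ S.toCausalNet) => (vmap p.2 : G.V → Fin n))
      {p | IsFusion p.2 ∧ IsSimpleNet p.1.toCausalNet}
      {L : G.V → Fin n | Function.Surjective L ∧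
        ∀ e : G.E, L (G.src e) < L (G.tgt e)} := by
  refine ⟨?mapsTo, ?injOn, ?surjOn⟩
  · rintro ⟨S, φ⟩ ⟨hφ, -⟩
    exact ⟨hφ.1.1.1, fun e => S.lt _ (hφ.mem_edges e)⟩
  · rintro ⟨S₁, φ₁⟩ ⟨hφ₁, hS₁⟩ ⟨S₂, φ₂⟩ ⟨hφ₂, -⟩
      (hL : (vmap φ₁ : G.V → Fin n) = vmap φ₂)
    obtain rfl : S₁ = S₂ := SortingNet.ext_edges (by rw [hφ₁.edges_eq, hφ₂.edges_eq, hL])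
    obtain rfl : φ₁ = φ₂ := hφ₁.ext_of_isSimpleNet hS₁ hφ₂ hL
    rfl
  · rintro L ⟨hsurj, hL⟩
    exact ⟨⟨_, homOfLinearColoring L hL⟩,
      ⟨isFusion_homOfLinearColoring hsurj hL, SortingNet.isSimpleNet _⟩, rfl⟩

end CausalNets
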